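/- arXiv:2312.12355 — 2 statements merged into one kernel-verified Lean document; each statement's English description precedes it below -/
import Mathlib

section
/- Suppose f : V → ℝ is differentiable and satisfies μ·(1/2)‖u−v‖²_M ≤ D_f(u,v) ≤ L·(1/2)‖u−v‖²_M for SPD M with 0 < μ ≤ L. Then the convex conjugate f* satisfies (1/L)·(1/2)‖ξ−η‖²_{M⁻¹} ≤ D_{f*}(ξ,η) ≤ (1/μ)·(1/2)‖ξ−η‖²_{M⁻¹} for all ξ, η; i.e., μ_{f*,M⁻¹} = 1/L_{f,M} and L_{f*,M⁻¹} = 1/μ_{f,M}. -/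
open RealInnerProductSpace Filter

/-!
Strong convexity makes `u ↦ ⟪ξ, u⟫ - f u` coercive, so the supremum defining `f*` is attained at a
point `u ξ`, where `∇f (u ξ) = ξ`. Put `v = u η`. Squeezing `f` between the quadratic models
`f v + ⟪η, · - v⟫ + c/2 ‖· - v‖²_M` with `c = μ` and `c = L`, and using that the conjugate of
`c/2 ‖·‖²_M` is `1/(2c) ‖·‖²_{M⁻¹}`, traps `f* ξ - f* η - ⟪v, ξ - η⟫` between
`1/(2L) ‖ξ - η‖²_{M⁻¹}` and `1/(2μ) ‖ξ - η‖²_{M⁻¹}`. A remainder that is `O(‖ξ - η‖²)` makes `f*`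
differentiable at `η` with `∇f* η = v`, and the two bounds become the claim.
-/

section Quadratic

variable {E : Type*} [NormedAddCommGroup E] [InnerProductSpace ℝ E] {M Minv : E →ₗ[ℝ] E}

theorem inner_sub_mul_half_inner_self_le (hMsym : ∀ x y, ⟪M x, y⟫ = ⟪x, M y⟫)
    (hMnonneg : ∀ x, 0 ≤ ⟪M x, x⟫) (hM : ∀ x, M (Minv x) = x) {c : ℝ} (hc : 0 < c) (d w : E) :
    ⟪d, w⟫ - c * (1/2 * ⟪M w, w⟫) ≤ 1/c * (1/2 * ⟪Minv d, d⟫) := by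
  have hd : d = M (Minv d) := (hM d).symm
  generalize Minv d = z at hd ⊢
  subst hd
  have hsq := hMnonneg (c • w - z)
  have hexpand : ⟪M (c • w - z), c • w - z⟫ = c ^ 2 * ⟪M w, w⟫ - 2 * c * ⟪M z, w⟫ + ⟪M z, z⟫ := by
    simp only [map_sub, map_smul, inner_sub_left, inner_sub_right, real_inner_smul_left,
      real_inner_smul_right, hMsym w z, real_inner_comm (M z) w]
    ring
  rw [hexpand] at hsq
  rw [real_inner_comm (M z) z]
  field_simp
  nlinarith

theorem inner_sub_mul_half_inner_self_eq (hM : ∀ x, M (Minv x) = x) {c : ℝ} (hc : c ≠ 0)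
    (d : E) :
    ⟪d, c⁻¹ • Minv d⟫ - c * (1/2 * ⟪M (c⁻¹ • Minv d), c⁻¹ • Minv d⟫) =
      1/c * (1/2 * ⟪Minv d, d⟫) := by
  simp only [map_smul, real_inner_smul_left, real_inner_smul_right, hM, real_inner_comm d]
  field_simp
  ring

theorem inner_map_self_nonneg_of_rightInverse (hMnonneg : ∀ x, 0 ≤ ⟪M x, x⟫)
    (hM : ∀ x, M (Minv x) = x) (d : E) : 0 ≤ ⟪Minv d, d⟫ := by
  simpa [hM, real_inner_comm] using hMnonneg (Minv d)

end Quadratic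

section Analysis

variable {E : Type*} [NormedAddCommGroup E] [InnerProductSpace ℝ E]

theorem exists_pos_mul_norm_sq_le_inner_map_self [FiniteDimensional ℝ E] (M : E →ₗ[ℝ] E)
    (hMpos : ∀ x, x ≠ 0 → 0 < ⟪M x, x⟫) : ∃ c > 0, ∀ x, c * ‖x‖ ^ 2 ≤ ⟪M x, x⟫ := by
  rcases subsingleton_or_nontrivial E with _ | _
  · exact ⟨1, one_pos, fun x => by simp [Subsingleton.elim x 0]⟩
  have hcont : Continuous fun x => ⟪M x, x⟫ :=
    M.continuous_of_finiteDimensional.inner continuous_id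
  obtain ⟨y, hy, hmin⟩ := (isCompact_sphere (0 : E) 1).exists_isMinOn
    (NormedSpace.sphere_nonempty.2 zero_le_one) hcont.continuousOn
  have hy1 : ‖y‖ = 1 := by simpa using hy
  refine ⟨⟪M y, y⟫, hMpos y (by rintro rfl; simp at hy1), fun x => ?_⟩
  rcases eq_or_ne x 0 with rfl | hx
  · simp
  have hx' : ‖x‖⁻¹ • x ∈ Metric.sphere (0 : E) 1 := by
    simp [norm_smul, hx]
  have hxmin := hmin hx'
  simp only [Set.mem_ofPred_eq, map_smul, real_inner_smul_left, real_inner_smul_right] at hxmin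
  have hxpos : 0 < ‖x‖ := norm_pos_iff.2 hx
  calc ⟪M y, y⟫ * ‖x‖ ^ 2 ≤ ‖x‖⁻¹ * (‖x‖⁻¹ * ⟪M x, x⟫) * ‖x‖ ^ 2 := by gcongr
    _ = ⟪M x, x⟫ := by field_simp

theorem tendsto_cocompact_atTop_of_quadratic_le {F : Type*} [NormedAddCommGroup F]
    [ProperSpace F] {g : F → ℝ} {a b B : ℝ} (ha : 0 < a)
    (hg : ∀ u, a * ‖u‖ ^ 2 - b * ‖u‖ - B ≤ g u) :
    Tendsto g (cocompact F) atTop := by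
  have hquad : Tendsto (fun t : ℝ => t * (a * t - b) - B) atTop atTop :=
    tendsto_atTop_add_const_right _ _ <|
      tendsto_id.atTop_mul_atTop₀ <| tendsto_atTop_add_const_right _ _ <|
        tendsto_id.const_mul_atTop ha
  refine tendsto_atTop_mono (fun u => ?_) (hquad.comp tendsto_norm_cocompact_atTop)
  simpa [mul_sub, ← sq, mul_comm, mul_left_comm] using hg u

theorem gradient_eq_of_forall_inner_sub_le [CompleteSpace E] {f : E → ℝ} {ζ u : E}
    (hf : DifferentiableAt ℝ f u) (hmax : ∀ w, ⟪ζ, w⟫ - f w ≤ ⟪ζ, u⟫ - f u) :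
    gradient f u = ζ := by
  have hlocal : IsLocalMax (fun w => ⟪ζ, w⟫ - f w) u := Eventually.of_forall hmax
  have hderiv : HasFDerivAt (fun w => ⟪ζ, w⟫ - f w)
      (InnerProductSpace.toDual ℝ E ζ - fderiv ℝ f u) u :=
    (innerSL ℝ ζ).hasFDerivAt.sub hf.hasFDerivAt
  have hcrit := sub_eq_zero.1 (hderiv.fderiv ▸ hlocal.fderiv_eq_zero)
  rw [gradient, ← hcrit, LinearIsometryEquiv.symm_apply_apply]

theorem hasGradientAt_of_abs_le_mul_norm_sq [CompleteSpace E] {g : E → ℝ} {x v : E} {K : ℝ}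
    (h : ∀ y, |g y - g x - ⟪v, y - x⟫| ≤ K * ‖y - x‖ ^ 2) : HasGradientAt g v x := by
  rw [hasGradientAt_iff_hasFDerivAt, hasFDerivAt_iff_isLittleO_nhds_zero]
  refine Asymptotics.IsBigO.trans_isLittleO (Asymptotics.IsBigO.of_bound K ?_)
    (Asymptotics.isLittleO_norm_pow_id one_lt_two)
  refine Eventually.of_forall fun y => ?_
  simpa using h (x + y)

theorem exists_forall_inner_sub_le_of_strongly_convex [FiniteDimensional ℝ E] {f : E → ℝ}
    (hf : Continuous f) {M : E →ₗ[ℝ] E} (hMpos : ∀ x, x ≠ 0 → 0 < ⟪M x, x⟫) {μ : ℝ}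
    (hμ : 0 < μ) {a : E} (hlow : ∀ u, μ * (1/2 * ⟪M u, u⟫) ≤ f u - f 0 - ⟪a, u⟫) (ζ : E) :
    ∃ u, ∀ w, ⟪ζ, w⟫ - f w ≤ ⟪ζ, u⟫ - f u := by
  obtain ⟨c, hc, hcM⟩ := exists_pos_mul_norm_sq_le_inner_map_self M hMpos
  have hcoercive : ∀ w, μ * c / 2 * ‖w‖ ^ 2 - ‖ζ - a‖ * ‖w‖ - -f 0 ≤ f w - ⟪ζ, w⟫ := by
    intro w
    have hCS := real_inner_le_norm (ζ - a) w
    rw [inner_sub_left] at hCS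
    nlinarith [hlow w, hcM w]
  obtain ⟨u, hu⟩ := Continuous.exists_forall_le (f := fun w => f w - ⟪ζ, w⟫) (by fun_prop)
    (tendsto_cocompact_atTop_of_quadratic_le (by positivity) hcoercive)
  exact ⟨u, fun w => by linarith [hu w]⟩

end Analysis

section Conjugate

variable {E : Type*} [NormedAddCommGroup E] [InnerProductSpace ℝ E] {M Minv : E →ₗ[ℝ] E}
  {f fstar : E → ℝ} {u v ζ η : E} {c : ℝ}

theorem conj_bregman_le_of_strong_convexity (hMsym : ∀ x y, ⟪M x, y⟫ = ⟪x, M y⟫)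
    (hMnonneg : ∀ x, 0 ≤ ⟪M x, x⟫) (hM : ∀ x, M (Minv x) = x) (hc : 0 < c)
    (hζ : fstar ζ = ⟪ζ, u⟫ - f u) (hη : fstar η = ⟪η, v⟫ - f v)
    (hlow : c * (1/2 * ⟪M (u - v), u - v⟫) ≤ f u - f v - ⟪η, u - v⟫) :
    fstar ζ - fstar η - ⟪v, ζ - η⟫ ≤ 1/c * (1/2 * ⟪Minv (ζ - η), ζ - η⟫) := by
  have hquad := inner_sub_mul_half_inner_self_le hMsym hMnonneg hM hc (ζ - η) (u - v)
  rw [hζ, hη]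
  simp only [inner_sub_left, inner_sub_right, real_inner_comm v ζ, real_inner_comm v η]
    at hquad hlow ⊢
  linarith

theorem le_conj_bregman_of_smoothness (hM : ∀ x, M (Minv x) = x) (hc : 0 < c)
    (hyoung : ∀ w, ⟪ζ, w⟫ - f w ≤ fstar ζ) (hη : fstar η = ⟪η, v⟫ - f v)
    (hup : ∀ u, f u - f v - ⟪η, u - v⟫ ≤ c * (1/2 * ⟪M (u - v), u - v⟫)) :
    1/c * (1/2 * ⟪Minv (ζ - η), ζ - η⟫) ≤ fstar ζ - fstar η - ⟪v, ζ - η⟫ := by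
  have hquad := inner_sub_mul_half_inner_self_eq hM hc.ne' (ζ - η)
  set w := c⁻¹ • Minv (ζ - η)
  have hsmooth := hup (v + w)
  have hfw := hyoung (v + w)
  rw [add_sub_cancel_left] at hsmooth
  rw [hη]
  simp only [inner_sub_left, inner_sub_right, inner_add_right, real_inner_comm v ζ,
    real_inner_comm v η] at hquad hsmooth hfw ⊢
  linarith

theorem hasGradientAt_of_remainder_nonneg_of_le_quadratic [FiniteDimensional ℝ E]
    {g : E → ℝ} (hnonneg : ∀ ζ, 0 ≤ g ζ - g η - ⟪v, ζ - η⟫)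
    (hle : ∀ ζ, g ζ - g η - ⟪v, ζ - η⟫ ≤ c * (1/2 * ⟪Minv (ζ - η), ζ - η⟫)) :
    HasGradientAt g v η := by
  set C := ‖LinearMap.toContinuousLinearMap Minv‖
  have hMinv_le : ∀ d, |⟪Minv d, d⟫| ≤ C * ‖d‖ ^ 2 := fun d =>
    (abs_real_inner_le_norm _ _).trans <| by
      rw [sq, ← mul_assoc]
      exact mul_le_mul_of_nonneg_right ((LinearMap.toContinuousLinearMap Minv).le_opNorm d)
        (norm_nonneg d)
  refine hasGradientAt_of_abs_le_mul_norm_sq (K := |c| * (1/2 * C)) fun ζ => ?_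
  rw [abs_of_nonneg (hnonneg ζ)]
  calc _ ≤ c * (1/2 * ⟪Minv (ζ - η), ζ - η⟫) := hle ζ
    _ ≤ |c * (1/2 * ⟪Minv (ζ - η), ζ - η⟫)| := le_abs_self _
    _ = |c| * (1/2 * |⟪Minv (ζ - η), ζ - η⟫|) := by
      rw [abs_mul, abs_mul, abs_of_pos (one_half_pos (α := ℝ))]
    _ ≤ |c| * (1/2 * (C * ‖ζ - η‖ ^ 2)) := by gcongr; exact hMinv_le _
    _ = _ := by ring

end Conjugate

theorem stmt_4_general {n : ℕ} (f : EuclideanSpace ℝ (Fin n) → ℝ) (hf : Differentiable ℝ f)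
    (M Minv : EuclideanSpace ℝ (Fin n) →ₗ[ℝ] EuclideanSpace ℝ (Fin n))
    (hMsym : ∀ x y, ⟪M x, y⟫ = ⟪x, M y⟫)
    (hMpos : ∀ x, x ≠ 0 → 0 < ⟪M x, x⟫)
    (hMinv' : M ∘ₗ Minv = LinearMap.id)
    (μ L : ℝ) (hμ0 : 0 < μ) (hμL : μ ≤ L)
    (hlow : ∀ u v, μ * (1/2 * ⟪M (u - v), u - v⟫) ≤ f u - f v - ⟪gradient f v, u - v⟫)
    (hup : ∀ u v, f u - f v - ⟪gradient f v, u - v⟫ ≤ L * (1/2 * ⟪M (u - v), u - v⟫))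
    (fstar : EuclideanSpace ℝ (Fin n) → ℝ)
    (hfstar : ∀ ξ, fstar ξ = ⨆ u, (⟪ξ, u⟫ - f u)) :
    ∀ ξ η,
      (1/L) * (1/2 * ⟪Minv (ξ - η), ξ - η⟫) ≤
          fstar ξ - fstar η - ⟪gradient fstar η, ξ - η⟫ ∧
        fstar ξ - fstar η - ⟪gradient fstar η, ξ - η⟫ ≤
          (1/μ) * (1/2 * ⟪Minv (ξ - η), ξ - η⟫) := by
  intro ξ η
  have hL : 0 < L := hμ0.trans_le hμL
  have hM : ∀ x, M (Minv x) = x := LinearMap.ext_iff.1 hMinv'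
  have hMnonneg : ∀ x, 0 ≤ ⟪M x, x⟫ := fun x => by
    rcases eq_or_ne x 0 with rfl | hx
    · simp
    · exact (hMpos x hx).le
  choose u hu using exists_forall_inner_sub_le_of_strongly_convex hf.continuous hMpos hμ0
    fun w => by simpa only [sub_zero] using hlow w 0
  have hconj : ∀ ζ, fstar ζ = ⟪ζ, u ζ⟫ - f (u ζ) := fun ζ => (hfstar ζ).trans <|
    ciSup_eq_of_forall_le_of_forall_lt_exists_gt (hu ζ) fun _ hlt => ⟨u ζ, hlt⟩
  have hgrad_f : gradient f (u η) = η := gradient_eq_of_forall_inner_sub_le (hf _) (hu η)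
  have hupper : ∀ ζ, fstar ζ - fstar η - ⟪u η, ζ - η⟫ ≤ 1/μ * (1/2 * ⟪Minv (ζ - η), ζ - η⟫) :=
    fun ζ => conj_bregman_le_of_strong_convexity hMsym hMnonneg hM hμ0 (hconj ζ) (hconj η)
      (by simpa only [hgrad_f] using hlow (u ζ) (u η))
  have hlower : ∀ ζ, 1/L * (1/2 * ⟪Minv (ζ - η), ζ - η⟫) ≤ fstar ζ - fstar η - ⟪u η, ζ - η⟫ :=
    fun ζ => le_conj_bregman_of_smoothness hM hL (fun w => hconj ζ ▸ hu ζ w) (hconj η)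
      fun w => by simpa only [hgrad_f] using hup w (u η)
  have hgrad_fstar : HasGradientAt fstar (u η) η :=
    hasGradientAt_of_remainder_nonneg_of_le_quadratic (fun ζ => (hlower ζ).trans' <|
      mul_nonneg (by positivity) <| mul_nonneg (by norm_num) <|
        inner_map_self_nonneg_of_rightInverse hMnonneg hM _) hupper
  rw [hgrad_fstar.gradient]
  exact ⟨hlower ξ, hupper ξ⟩

/-- Relation (6.2): conjugate function convexity/smoothness constants in the dual metric. -/
theorem stmt_4 {n : ℕ} (f : EuclideanSpace ℝ (Fin n) → ℝ) (hf : Differentiable ℝ f)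
    (M Minv : EuclideanSpace ℝ (Fin n) →ₗ[ℝ] EuclideanSpace ℝ (Fin n))
    (hMsym : ∀ x y, ⟪M x, y⟫ = ⟪x, M y⟫)
    (hMpos : ∀ x, x ≠ 0 → 0 < ⟪M x, x⟫)
    (hMinv : Minv ∘ₗ M = LinearMap.id) (hMinv' : M ∘ₗ Minv = LinearMap.id)
    (μ L : ℝ) (hμ0 : 0 < μ) (hμL : μ ≤ L)
    (hlow : ∀ u v, μ * (1/2 * ⟪M (u - v), u - v⟫) ≤ f u - f v - ⟪gradient f v, u - v⟫)
    (hup : ∀ u v, f u - f v - ⟪gradient f v, u - v⟫ ≤ L * (1/2 * ⟪M (u - v), u - v⟫))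
    (fstar : EuclideanSpace ℝ (Fin n) → ℝ)
    (hfstar : ∀ ξ, fstar ξ = ⨆ u, (⟪ξ, u⟫ - f u)) :
    ∀ ξ η,
      (1/L) * (1/2 * ⟪Minv (ξ - η), ξ - η⟫) ≤
          fstar ξ - fstar η - ⟪gradient fstar η, ξ - η⟫ ∧
        fstar ξ - fstar η - ⟪gradient fstar η, ξ - η⟫ ≤
          (1/μ) * (1/2 * ⟪Minv (ξ - η), ξ - η⟫) :=
  stmt_4_general f hf M Minv hMsym hMpos hMinv' μ L hμ0 hμL hlow hup fstar hfstar
end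

section
/- Discrete one-step contraction (Theorem 3.2, single step): Let V, Q be finite-dimensional Hilbert spaces, B : V → Q surjective, I_V SPD on V, f ∈ S_{1, L_f} w.r.t. I_V with saddle point (u*, p*) satisfying ∇f(u*) + Bᵀp* = 0, Bu* = b. Let S = B I_V⁻¹ Bᵀ, S̃ and I_Q SPD on Q, β = 1/(2L_f), μ̃ = λ_min(S̃⁻¹S), γ = β μ̃, I_Q⁺ = (1/(1+αγ))(I_Q + αγ S̃), L_S = λ_max((I_Q⁺)⁻¹S). Given (u, p), define the updates u_{1/2} = u − I_V⁻¹(∇f(u) + Bᵀp), p⁺ = p + α (I_Q⁺)⁻¹(B u_{1/2} − b), u⁺ = (1−α)u + α u_{1/2}. If 0 < α ≤ β/(2(L_f + L_S)) · min{μ̃/L_S, 1}, then E⁺ := D_f(u⁺, u*) + (1/2)‖p⁺ − p*‖²_{I_Q⁺} ≤ ρ(α) E where E := D_f(u, u*) + (1/2)‖p − p*‖²_{I_Q} and ρ(α) < 1; in particular with α = β/(4(L_f + L_S))·min{μ̃/L_S, 1}, E⁺ ≤ (1 − (1/2)min{αγ/(1+αγ), αβ}) E. -/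
/-!
One step of TPDv is analysed through the Lyapunov function
`E(u, p) = D_f(u, u*) + ½ ‖p - p*‖²_{I_Q}`. The three-point identity for the Bregman divergence
and the smoothness of `f` bound the primal error after the step; the dual error expands exactly
in the metric `I_Q⁺`. In the sum, the cross terms are absorbed by Young's inequality in the dual
pair of norms `‖·‖_{I_V}`, `‖·‖_{I_V⁻¹}`, using strong convexity and cocoercivity of `∇f`, and
the terms quadratic in `α` are dominated once `α (L_f + L_S) ≤ β / 2`. What is left,
`-(α β / 2) ‖Bᵀ(p - p*)‖²_{I_V⁻¹}`, is at most `-(α γ / 2) ‖p - p*‖²_{S̃}` because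
`μ̃ = λ_min(S̃⁻¹ S)`; this pays for the `S̃`-part of `I_Q⁺` and gives the contraction factor
`1 / (1 + α γ)` on the dual part. The spectral bounds are Rayleigh-quotient bounds for `S̃⁻¹ S`
and `(I_Q⁺)⁻¹ S`, which are symmetric for the inner products `⟪S̃ x, y⟫` and `⟪I_Q⁺ x, y⟫`.
-/

open RealInnerProductSpace Module.End

namespace LinearMap

section Rayleigh

variable {F : Type*} [NormedAddCommGroup F] [InnerProductSpace ℝ F] [FiniteDimensional ℝ F]

theorem bddBelow_rayleigh (T : F →ₗ[ℝ] F) :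
    BddBelow (Set.range fun x : {x : F // x ≠ 0} ↦ ⟪T x, x⟫ / ‖(x : F)‖ ^ 2) := by
  refine ⟨-‖T.toContinuousLinearMap‖, ?_⟩
  rintro _ ⟨x, rfl⟩
  exact (abs_le.mp (T.toContinuousLinearMap.rayleighQuotient_le_norm x)).1

variable {T : F →ₗ[ℝ] F}

theorem IsSymmetric.sInf_spectrum_mul_norm_sq_le [Nontrivial F] (hT : T.IsSymmetric) (x : F) :
    sInf (spectrum ℝ T) * ‖x‖ ^ 2 ≤ ⟪T x, x⟫ := by
  rcases eq_or_ne x 0 with rfl | hx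
  · simp
  have hmin : sInf (spectrum ℝ T) ≤ ⨅ x : {x : F // x ≠ 0}, ⟪T x, x⟫ / ‖(x : F)‖ ^ 2 :=
    csInf_le (finite_spectrum T).bddBelow
      (hasEigenvalue_iff_mem_spectrum.mp hT.hasEigenvalue_iInf_of_finiteDimensional)
  rw [← le_div_iff₀ (by positivity)]
  exact hmin.trans (ciInf_le (bddBelow_rayleigh T) ⟨x, hx⟩)

theorem IsSymmetric.inner_le_sSup_spectrum_mul_norm_sq [Nontrivial F] (hT : T.IsSymmetric)
    (x : F) : ⟪T x, x⟫ ≤ sSup (spectrum ℝ T) * ‖x‖ ^ 2 := by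
  have hneg : (-T).IsSymmetric := fun x y ↦ by simp [hT x y]
  have h := hneg.sInf_spectrum_mul_norm_sq_le x
  rw [← spectrum.neg_eq, Real.sInf_neg, neg_apply, inner_neg_left] at h
  linarith

theorem IsSymmetric.sInf_spectrum_mem [Nontrivial F] (hT : T.IsSymmetric) :
    sInf (spectrum ℝ T) ∈ spectrum ℝ T :=
  Set.Nonempty.csInf_mem
    ⟨_, hasEigenvalue_iff_mem_spectrum.mp hT.hasEigenvalue_iInf_of_finiteDimensional⟩
    (finite_spectrum T)

end Rayleigh

section Quadratic

variable {E : Type*} [NormedAddCommGroup E] [InnerProductSpace ℝ E] {A Ainv M : E →ₗ[ℝ] E}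

theorem isPositive_of_inner_pos (hA : A.IsSymmetric) (hpos : ∀ x, x ≠ 0 → 0 < ⟪A x, x⟫) :
    A.IsPositive := by
  refine A.isPositive_iff.2 ⟨hA, fun x ↦ ?_⟩
  rcases eq_or_ne x 0 with rfl | hx
  · simp
  · exact (hpos x hx).le

theorem inner_smul_add_smul_apply (c d : ℝ) (x : E) :
    ⟪(c • (A + d • M)) x, x⟫ = c * (⟪A x, x⟫ + d * ⟪M x, x⟫) := by
  simp only [smul_apply, add_apply, inner_add_left, real_inner_smul_left]

theorem inner_smul_add_smul_pos (hApos : ∀ x, x ≠ 0 → 0 < ⟪A x, x⟫)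
    (hMpos : ∀ x, x ≠ 0 → 0 < ⟪M x, x⟫) {c d : ℝ} (hc : 0 < c) (hd : 0 < d) {x : E}
    (hx : x ≠ 0) : 0 < ⟪(c • (A + d • M)) x, x⟫ := by
  have := hApos x hx
  have := hMpos x hx
  rw [inner_smul_add_smul_apply]
  positivity

theorem IsSymmetric.inner_map_sub_sub (hA : A.IsSymmetric) (x y : E) :
    ⟪A (x - y), x - y⟫ = ⟪A x, x⟫ - 2 * ⟪A x, y⟫ + ⟪A y, y⟫ := by
  rw [map_sub, inner_sub_left, inner_sub_right, inner_sub_right, hA y x, real_inner_comm (A x) y]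
  ring

theorem IsPositive.inner_map_add_add_le (hA : A.IsPositive) (x y : E) :
    ⟪A (x + y), x + y⟫ ≤ 2 * ⟪A x, x⟫ + 2 * ⟪A y, y⟫ := by
  have h := hA.inner_nonneg_left (x - y)
  rw [hA.isSymmetric.inner_map_sub_sub] at h
  rw [map_add, inner_add_left, inner_add_right, inner_add_right, hA.isSymmetric y x,
    real_inner_comm (A x) y]
  linarith

theorem IsSymmetric.inner_map_add_smul_inv (hA : A.IsSymmetric) (hAinv : A ∘ₗ Ainv = id)
    (q r : E) (α : ℝ) :
    ⟪A (q + α • Ainv r), q + α • Ainv r⟫ = ⟪A q, q⟫ + 2 * α * ⟪r, q⟫ + α ^ 2 * ⟪Ainv r, r⟫ := by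
  have hAr : A (Ainv r) = r := DFunLike.congr_fun hAinv r
  rw [map_add, map_smul, hAr, inner_add_left, inner_add_right, inner_add_right,
    real_inner_smul_left, real_inner_smul_right, real_inner_smul_left, real_inner_smul_right,
    hA q (Ainv r), hAr, real_inner_comm q r, real_inner_comm (Ainv r) r]
  ring

theorem IsSymmetric.inner_inv_apply (hA : A.IsSymmetric) (hAinv : A ∘ₗ Ainv = id) (x y : E) :
    ⟪Ainv x, y⟫ = ⟪A (Ainv x), Ainv y⟫ := by
  rw [hA, ← comp_apply A Ainv y, hAinv, id_apply]

theorem IsPositive.inv (hA : A.IsPositive) (hAinv : A ∘ₗ Ainv = id) : Ainv.IsPositive := by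
  refine Ainv.isPositive_iff.2 ⟨fun x y ↦ ?_, fun x ↦ ?_⟩
  · calc ⟪Ainv x, y⟫ = ⟪A (Ainv x), Ainv y⟫ := hA.isSymmetric.inner_inv_apply hAinv x y
      _ = ⟪A (Ainv y), Ainv x⟫ := by rw [hA.isSymmetric, real_inner_comm]
      _ = ⟪x, Ainv y⟫ := by rw [← hA.isSymmetric.inner_inv_apply hAinv, real_inner_comm]
  · rw [hA.isSymmetric.inner_inv_apply hAinv]
    exact hA.inner_nonneg_left _

theorem IsSymmetric.inner_inv_pos (hA : A.IsSymmetric) (hApos : ∀ x, x ≠ 0 → 0 < ⟪A x, x⟫)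
    (hAinv : A ∘ₗ Ainv = id) {x : E} (hx : x ≠ 0) : 0 < ⟪Ainv x, x⟫ := by
  rw [hA.inner_inv_apply hAinv]
  refine hApos _ fun h ↦ hx ?_
  rw [← id_apply (R := ℝ) x, ← hAinv, comp_apply, h, map_zero]

theorem IsPositive.inner_le_young (hA : A.IsPositive) (hAinv : A ∘ₗ Ainv = id) {c : ℝ}
    (hc : 0 < c) (x g : E) :
    ⟪x, g⟫ ≤ 1 / (4 * c) * ⟪A x, x⟫ + c * ⟪Ainv g, g⟫ := by
  have hAg : A (Ainv g) = g := DFunLike.congr_fun hAinv g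
  have e1 : ⟪A x, (2 * c) • Ainv g⟫ = 2 * c * ⟪x, g⟫ := by
    rw [real_inner_smul_right, hA.isSymmetric, hAg]
  have e2 : ⟪A ((2 * c) • Ainv g), (2 * c) • Ainv g⟫ = (2 * c) ^ 2 * ⟪Ainv g, g⟫ := by
    rw [map_smul, hAg, real_inner_smul_left, real_inner_smul_right, real_inner_comm]
    ring
  have h := hA.inner_nonneg_left (x - (2 * c) • Ainv g)
  rw [hA.isSymmetric.inner_map_sub_sub, e1, e2] at h
  have hsq : 1 / (4 * c) * ⟪A x, x⟫ + c * ⟪Ainv g, g⟫ - ⟪x, g⟫ =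
      (⟪A x, x⟫ - 2 * (2 * c * ⟪x, g⟫) + (2 * c) ^ 2 * ⟪Ainv g, g⟫) / (4 * c) := by
    field_simp
    ring
  rw [← sub_nonneg, hsq]
  positivity

end Quadratic

end LinearMap

section Generalized

variable {E : Type*} [NormedAddCommGroup E] [InnerProductSpace ℝ E]

/-- A copy of `E`, to be equipped with the inner product `⟪A x, y⟫`. -/
def WithWeight (_A : E →ₗ[ℝ] E) : Type _ := E

namespace WithWeight

variable (A : E →ₗ[ℝ] E)

instance : AddCommGroup (WithWeight A) := inferInstanceAs (AddCommGroup E)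

instance : Module ℝ (WithWeight A) := inferInstanceAs (Module ℝ E)

instance [FiniteDimensional ℝ E] : FiniteDimensional ℝ (WithWeight A) :=
  inferInstanceAs (FiniteDimensional ℝ E)

instance [Nontrivial E] : Nontrivial (WithWeight A) := inferInstanceAs (Nontrivial E)

abbrev innerCore (hA : A.IsSymmetric) (hApos : ∀ x, x ≠ 0 → 0 < ⟪A x, x⟫) :
    InnerProductSpace.Core ℝ (WithWeight A) where
  inner x y := ⟪A x, y⟫
  conj_inner_symm (x y : E) := by simp [hA y x, real_inner_comm]
  re_inner_nonneg (x : E) := (LinearMap.isPositive_of_inner_pos hA hApos).inner_nonneg_left x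
  add_left (x y z : E) := by rw [← inner_add_left, ← map_add]; rfl
  smul_left (x y : E) r := by rw [conj_trivial, ← real_inner_smul_left, ← map_smul]; rfl
  definite (x : E) h := by
    by_contra hx
    exact (hApos x hx).ne' h

end WithWeight

variable [FiniteDimensional ℝ E] {A Ainv M : E →ₗ[ℝ] E}

/-- `A⁻¹ M` is symmetric for the inner product `⟪A x, y⟫`, so the Rayleigh bounds apply there. -/
theorem LinearMap.IsSymmetric.inv_comp_rayleigh_bounds [Nontrivial E] (hA : A.IsSymmetric)
    (hApos : ∀ x, x ≠ 0 → 0 < ⟪A x, x⟫) (hAinv : A ∘ₗ Ainv = LinearMap.id) (hM : M.IsSymmetric) :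
    sInf (spectrum ℝ (Ainv ∘ₗ M)) ∈ spectrum ℝ (Ainv ∘ₗ M) ∧
      ∀ x, sInf (spectrum ℝ (Ainv ∘ₗ M)) * ⟪A x, x⟫ ≤ ⟪M x, x⟫ ∧
        ⟪M x, x⟫ ≤ sSup (spectrum ℝ (Ainv ∘ₗ M)) * ⟪A x, x⟫ := by
  let core := WithWeight.innerCore A hA hApos
  let : NormedAddCommGroup (WithWeight A) := core.toNormedAddCommGroup
  let : InnerProductSpace ℝ (WithWeight A) := InnerProductSpace.ofCore core.toCore
  let T : WithWeight A →ₗ[ℝ] WithWeight A := Ainv ∘ₗ M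
  have hAAinv : ∀ z, A (Ainv z) = z := DFunLike.congr_fun hAinv
  have hT : T.IsSymmetric := by
    show ∀ x y : E, ⟪A (Ainv (M x)), y⟫ = ⟪A x, Ainv (M y)⟫
    intro x y
    rw [hAAinv, hM, hA, hAAinv]
  refine ⟨hT.sInf_spectrum_mem, fun x ↦ ?_⟩
  let x' : WithWeight A := x
  have hnorm : ‖x'‖ ^ 2 = ⟪A x, x⟫ := (real_inner_self_eq_norm_sq x').symm
  have hTx : ⟪T x', x'⟫ = ⟪M x, x⟫ := by
    show ⟪A (Ainv (M x)), x⟫ = _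
    rw [hAAinv]
  have hlo := hT.sInf_spectrum_mul_norm_sq_le x'
  have hhi := hT.inner_le_sSup_spectrum_mul_norm_sq x'
  rw [hnorm, hTx] at hlo hhi
  exact ⟨hlo, hhi⟩

theorem pos_of_mem_spectrum_inv_comp (hApos : ∀ x, x ≠ 0 → 0 < ⟪A x, x⟫)
    (hAinv : A ∘ₗ Ainv = LinearMap.id) (hMpos : ∀ x, x ≠ 0 → 0 < ⟪M x, x⟫) {μ : ℝ}
    (hμ : μ ∈ spectrum ℝ (Ainv ∘ₗ M)) : 0 < μ := by
  obtain ⟨v, hv⟩ := (hasEigenvalue_iff_mem_spectrum.mpr hμ).exists_hasEigenvector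
  have hMv : M v = μ • A v := by
    rw [← map_smul, ← mem_eigenspace_iff.mp hv.1]
    exact (DFunLike.congr_fun hAinv (M v)).symm
  have h := hMpos v hv.2
  rw [hMv, real_inner_smul_left] at h
  exact pos_of_mul_pos_left h (hApos v hv.2).le

end Generalized

section Bregman

variable {E : Type*} [NormedAddCommGroup E] [InnerProductSpace ℝ E] [CompleteSpace E]
  {f : E → ℝ}

noncomputable def bregman (f : E → ℝ) (u v : E) : ℝ := f u - f v - ⟪gradient f v, u - v⟫

theorem bregman_three_point (f : E → ℝ) (x y z : E) :
    bregman f x z = bregman f x y + bregman f y z + ⟪gradient f y - gradient f z, x - y⟫ := by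
  simp only [bregman, inner_sub_left, inner_sub_right]
  ring

theorem bregman_add_bregman_swap (f : E → ℝ) (x y : E) :
    bregman f x y + bregman f y x = ⟪x - y, gradient f x - gradient f y⟫ := by
  simp only [bregman, inner_sub_left, inner_sub_right, real_inner_comm]
  ring

theorem bregman_sub_smul_le {A : E →ₗ[ℝ] E} {L : ℝ}
    (hsmooth : ∀ u v, bregman f u v ≤ L / 2 * ⟪A (u - v), u - v⟫) (u z d : E) (α : ℝ) :
    bregman f (u - α • d) z ≤
      bregman f u z - α * ⟪gradient f u - gradient f z, d⟫ + L / 2 * α ^ 2 * ⟪A d, d⟫ := by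
  have h3 := bregman_three_point f (u - α • d) u z
  have hs := hsmooth (u - α • d) u
  rw [sub_sub_cancel_left, inner_neg_right, real_inner_smul_right] at h3
  rw [sub_sub_cancel_left, map_neg, inner_neg_neg, map_smul, real_inner_smul_left,
    real_inner_smul_right] at hs
  linarith

theorem inner_inv_gradient_sub_le_bregman {A Ainv : E →ₗ[ℝ] E} (hAinv : A ∘ₗ Ainv = LinearMap.id)
    {L : ℝ} (hL : 0 < L) (hconv : ∀ u v, 0 ≤ bregman f u v)
    (hsmooth : ∀ u v, bregman f u v ≤ L / 2 * ⟪A (u - v), u - v⟫) (u v : E) :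
    1 / (2 * L) * ⟪Ainv (gradient f u - gradient f v), gradient f u - gradient f v⟫ ≤
      bregman f u v := by
  set d := gradient f u - gradient f v
  -- compare `f` at `v` with its value at the gradient step `u - L⁻¹ A⁻¹ d`
  have hstep := bregman_sub_smul_le hsmooth u v (Ainv d) (1 / L)
  have hAd : A (Ainv d) = d := DFunLike.congr_fun hAinv d
  rw [hAd, real_inner_comm] at hstep
  have hconv' := hconv (u - (1 / L) • Ainv d) v
  have e1 : L / 2 * (1 / L) ^ 2 * ⟪Ainv d, d⟫ = 1 / 2 * (1 / L * ⟪Ainv d, d⟫) := by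
    field_simp
  have e2 : 1 / (2 * L) * ⟪Ainv d, d⟫ = 1 / 2 * (1 / L * ⟪Ainv d, d⟫) := by
    field_simp
  linarith

end Bregman

section Schur

variable {E F : Type*} [NormedAddCommGroup E] [InnerProductSpace ℝ E]
  [NormedAddCommGroup F] [InnerProductSpace ℝ F] {B : E →ₗ[ℝ] F} {Bt : F →ₗ[ℝ] E}
  {IV H : E →ₗ[ℝ] E}

theorem inner_comp_comp_apply (hBt : ∀ v q, ⟪B v, q⟫ = ⟪v, Bt q⟫) (q q' : F) :
    ⟪(B ∘ₗ H ∘ₗ Bt) q, q'⟫ = ⟪H (Bt q), Bt q'⟫ :=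
  hBt _ _

theorem isSymmetric_comp_comp (hBt : ∀ v q, ⟪B v, q⟫ = ⟪v, Bt q⟫) (hH : H.IsSymmetric) :
    (B ∘ₗ H ∘ₗ Bt).IsSymmetric := fun q q' ↦ by
  rw [inner_comp_comp_apply hBt, hH, real_inner_comm, ← inner_comp_comp_apply hBt,
    real_inner_comm]

theorem inner_comp_comp_pos (hBt : ∀ v q, ⟪B v, q⟫ = ⟪v, Bt q⟫) (hB : Function.Surjective B)
    (hH : ∀ x, x ≠ 0 → 0 < ⟪H x, x⟫) {q : F} (hq : q ≠ 0) : 0 < ⟪(B ∘ₗ H ∘ₗ Bt) q, q⟫ := by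
  rw [inner_comp_comp_apply hBt]
  refine hH _ fun hBtq ↦ hq ?_
  obtain ⟨v, rfl⟩ := hB q
  rw [← inner_self_eq_zero (𝕜 := ℝ), hBt, hBtq, inner_zero_right]

theorem inner_inv_apply_le (hBt : ∀ v q, ⟪B v, q⟫ = ⟪v, Bt q⟫) (hIV : IV.IsPositive)
    (hH : IV ∘ₗ H = LinearMap.id) {P Pinv : F →ₗ[ℝ] F} (hPinv : P ∘ₗ Pinv = LinearMap.id)
    {L : ℝ} (hL : 0 < L) (hS : ∀ q, ⟪H (Bt q), Bt q⟫ ≤ L * ⟪P q, q⟫) (x : E) :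
    ⟪Pinv (B x), B x⟫ ≤ L * ⟪IV x, x⟫ := by
  set q := Pinv (B x)
  have hPq : P q = B x := DFunLike.congr_fun hPinv (B x)
  have hq : ⟪q, B x⟫ = ⟪x, Bt q⟫ := by rw [real_inner_comm, hBt]
  have hY := hIV.inner_le_young hH (c := 1 / (2 * L)) (by positivity) x (Bt q)
  have hSq := mul_le_mul_of_nonneg_left (hS q) (by positivity : (0 : ℝ) ≤ 1 / (2 * L))
  rw [hPq, real_inner_comm q (B x)] at hSq
  have e1 : 1 / (4 * (1 / (2 * L))) = L / 2 := by field_simp; ring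
  have e2 : 1 / (2 * L) * (L * ⟪q, B x⟫) = 1 / 2 * ⟪q, B x⟫ := by field_simp
  rw [e1] at hY
  linarith

variable [FiniteDimensional ℝ F] [Nontrivial F]

theorem sInf_spectrum_inv_comp_schur (hBt : ∀ v q, ⟪B v, q⟫ = ⟪v, Bt q⟫)
    (hB : Function.Surjective B) (hIV : IV.IsSymmetric) (hIVpos : ∀ x, x ≠ 0 → 0 < ⟪IV x, x⟫)
    (hH : IV ∘ₗ H = LinearMap.id) {T Tinv : F →ₗ[ℝ] F} (hT : T.IsSymmetric)
    (hTpos : ∀ x, x ≠ 0 → 0 < ⟪T x, x⟫) (hTinv : T ∘ₗ Tinv = LinearMap.id) :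
    0 < sInf (spectrum ℝ (Tinv ∘ₗ B ∘ₗ H ∘ₗ Bt)) ∧
      ∀ q, sInf (spectrum ℝ (Tinv ∘ₗ B ∘ₗ H ∘ₗ Bt)) * ⟪T q, q⟫ ≤ ⟪H (Bt q), Bt q⟫ := by
  have hS := isSymmetric_comp_comp hBt
    ((LinearMap.isPositive_of_inner_pos hIV hIVpos).inv hH).isSymmetric
  have hSpos := fun q (hq : q ≠ 0) ↦
    inner_comp_comp_pos hBt hB (fun _ ↦ hIV.inner_inv_pos hIVpos hH) hq
  obtain ⟨hmem, hbd⟩ := hT.inv_comp_rayleigh_bounds hTpos hTinv hS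
  exact ⟨pos_of_mem_spectrum_inv_comp hTpos hTinv hSpos hmem,
    fun q ↦ inner_comp_comp_apply hBt q q ▸ (hbd q).1⟩

theorem sSup_spectrum_inv_comp_schur (hBt : ∀ v q, ⟪B v, q⟫ = ⟪v, Bt q⟫)
    (hB : Function.Surjective B) (hIV : IV.IsSymmetric) (hIVpos : ∀ x, x ≠ 0 → 0 < ⟪IV x, x⟫)
    (hH : IV ∘ₗ H = LinearMap.id) {P Pinv : F →ₗ[ℝ] F} (hP : P.IsSymmetric)
    (hPpos : ∀ x, x ≠ 0 → 0 < ⟪P x, x⟫) (hPinv : P ∘ₗ Pinv = LinearMap.id) :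
    0 < sSup (spectrum ℝ (Pinv ∘ₗ B ∘ₗ H ∘ₗ Bt)) ∧
      ∀ x, ⟪Pinv (B x), B x⟫ ≤ sSup (spectrum ℝ (Pinv ∘ₗ B ∘ₗ H ∘ₗ Bt)) * ⟪IV x, x⟫ := by
  have hIVp := LinearMap.isPositive_of_inner_pos hIV hIVpos
  have hS := isSymmetric_comp_comp hBt (hIVp.inv hH).isSymmetric
  have hSpos := fun q (hq : q ≠ 0) ↦
    inner_comp_comp_pos hBt hB (fun _ ↦ hIV.inner_inv_pos hIVpos hH) hq
  obtain ⟨-, hbd⟩ := hP.inv_comp_rayleigh_bounds hPpos hPinv hS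
  have hL : 0 < sSup (spectrum ℝ (Pinv ∘ₗ B ∘ₗ H ∘ₗ Bt)) := by
    obtain ⟨q, hq⟩ := exists_ne (0 : F)
    exact pos_of_mul_pos_left ((hSpos q hq).trans_le (hbd q).2) (hPpos q hq).le
  exact ⟨hL, inner_inv_apply_le hBt hIVp hH hPinv hL fun q ↦
    inner_comp_comp_apply hBt q q ▸ (hbd q).2⟩

end Schur

section ErrorTerms

variable {E : Type*} [NormedAddCommGroup E] [InnerProductSpace ℝ E] {IV H : E →ₗ[ℝ] E}
  {β : ℝ}

theorem tpdv_cross_term_le (hIV : IV.IsPositive) (hH : IV ∘ₗ H = LinearMap.id) {D Ds : ℝ}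
    (hβ : β < 1) {e δ g : E} (he : ⟪IV e, e⟫ ≤ 2 * D) (hδ : β * ⟪H δ, δ⟫ ≤ Ds)
    (heδ : ⟪e, δ⟫ = D + Ds) (hD : 0 ≤ D) :
    -⟪δ, H (δ + g)⟫ + ⟪e - H (δ + g), g⟫ ≤ -((1 + β) / 2) * D - β * ⟪H g, g⟫ := by
  have hHsym := (hIV.inv hH).isSymmetric
  have hIVH : ∀ x, IV (H x) = x := DFunLike.congr_fun hH
  have hsplit : -⟪δ, H (δ + g)⟫ + ⟪e - H (δ + g), g⟫ =
      -⟪H δ, δ⟫ - ⟪H g, g⟫ + ⟪e - (2 : ℝ) • H δ, g⟫ := by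
    rw [map_add, inner_add_right, inner_sub_left, inner_add_left, inner_sub_left,
      real_inner_smul_left, ← hHsym δ g, real_inner_comm (H δ) δ]
    ring
  have hQ : ⟪IV (e - (2 : ℝ) • H δ), e - (2 : ℝ) • H δ⟫ ≤ 4 * (1 - β) * ⟪H δ, δ⟫ - 2 * D := by
    rw [hIV.isSymmetric.inner_map_sub_sub, map_smul, hIVH, real_inner_smul_right,
      real_inner_smul_left, real_inner_smul_right, hIV.isSymmetric e (H δ), hIVH,
      real_inner_comm (H δ) δ]
    linarith
  -- Young's inequality with weight `1 - β` leaves exactly `-β ⟪H g, g⟫` over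
  have hc : 0 < 1 - β := sub_pos.2 hβ
  have hY := hIV.inner_le_young hH hc (e - (2 : ℝ) • H δ) g
  have h1 := mul_le_mul_of_nonneg_left hQ (by positivity : (0 : ℝ) ≤ 1 / (4 * (1 - β)))
  have h2 : 1 / (4 * (1 - β)) * (4 * (1 - β) * ⟪H δ, δ⟫ - 2 * D) =
      ⟪H δ, δ⟫ - (1 + β) / 2 * D - β ^ 2 / (2 * (1 - β)) * D := by
    field_simp
    ring
  have h3 : 0 ≤ β ^ 2 / (2 * (1 - β)) * D := by positivity
  rw [hsplit]
  linarith

theorem tpdv_quadratic_term_le (hIV : IV.IsPositive) (hH : IV ∘ₗ H = LinearMap.id) {e δ g : E}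
    (he : ⟪IV e, e⟫ ≤ ⟪e, δ⟫) :
    ⟪IV (e - H (δ + g)), e - H (δ + g)⟫ ≤ 2 * ⟪H δ, δ⟫ + 2 * ⟪H g, g⟫ := by
  have hIVH : ∀ x, IV (H x) = x := DFunLike.congr_fun hH
  have hsplit : e - H (δ + g) = (e - H δ) + -(H g) := by
    rw [map_add]
    abel
  have hz : ⟪IV (e - H δ), e - H δ⟫ = ⟪IV e, e⟫ - 2 * ⟪e, δ⟫ + ⟪H δ, δ⟫ := by
    rw [hIV.isSymmetric.inner_map_sub_sub, hIV.isSymmetric e (H δ), hIVH,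
      real_inner_comm (H δ) δ]
  have hg : ⟪IV (-(H g)), -(H g)⟫ = ⟪H g, g⟫ := by
    rw [map_neg, inner_neg_neg, hIVH, real_inner_comm]
  have h := hIV.inner_map_add_add_le (e - H δ) (-(H g))
  have := hIV.inner_nonneg_left e
  rw [hsplit]
  linarith

end ErrorTerms

section TPDv

variable {E F : Type*} [NormedAddCommGroup E] [InnerProductSpace ℝ E] [CompleteSpace E]
  [NormedAddCommGroup F] [InnerProductSpace ℝ F] {f : E → ℝ} {IV H : E →ₗ[ℝ] E}
  {B : E →ₗ[ℝ] F} {Bt : F →ₗ[ℝ] E} {P Pinv : F →ₗ[ℝ] F} {Lf LS β α : ℝ}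

theorem tpdv_step_expand (hH : IV ∘ₗ H = LinearMap.id)
    (hup : ∀ u v, bregman f u v ≤ Lf / 2 * ⟪IV (u - v), u - v⟫)
    (hBt : ∀ v q, ⟪B v, q⟫ = ⟪v, Bt q⟫) (hP : P.IsSymmetric) (hPinv : P ∘ₗ Pinv = LinearMap.id)
    {ustar : E} {pstar : F} (hsaddle : gradient f ustar + Bt pstar = 0)
    {u uhalf uplus : E} {p pplus : F}
    (huhalf : uhalf = u - H (gradient f u + Bt p))
    (hpplus : pplus = p + α • Pinv (B uhalf - B ustar))
    (huplus : uplus = (1 - α) • u + α • uhalf)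
    {δ g : E} (hδ : δ = gradient f u - gradient f ustar) (hg : g = Bt (p - pstar)) :
    bregman f uplus ustar + 1 / 2 * ⟪P (pplus - pstar), pplus - pstar⟫ ≤
      bregman f u ustar + 1 / 2 * ⟪P (p - pstar), p - pstar⟫
        + α * (-⟪δ, H (δ + g)⟫ + ⟪u - ustar - H (δ + g), g⟫)
        + α ^ 2 * (Lf / 2 * ⟪H (δ + g), δ + g⟫
          + 1 / 2 * ⟪Pinv (B (u - ustar - H (δ + g))), B (u - ustar - H (δ + g))⟫) := by
  have hw : gradient f u + Bt p = δ + g := by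
    rw [hδ, hg, eq_neg_of_add_eq_zero_left hsaddle, map_sub]
    abel
  have hprimal := bregman_sub_smul_le hup u ustar (H (δ + g)) α
  have hIVH : IV (H (δ + g)) = δ + g := DFunLike.congr_fun hH (δ + g)
  rw [← hδ, hIVH, real_inner_comm (H (δ + g)) (δ + g)] at hprimal
  have huplus' : uplus = u - α • H (δ + g) := by
    rw [huplus, huhalf, hw]
    module
  have hpplus' : pplus - pstar = p - pstar + α • Pinv (B (u - ustar - H (δ + g))) := by
    rw [hpplus, ← map_sub, huhalf, hw, sub_right_comm, add_sub_right_comm]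
  rw [huplus', hpplus', hP.inner_map_add_smul_inv hPinv, hBt, ← hg]
  linarith

theorem tpdv_error_terms_le (hIV : IV.IsPositive) (hH : IV ∘ₗ H = LinearMap.id) (hLf : 1 ≤ Lf)
    (hβ : β = 1 / (2 * Lf)) (hlow : ∀ u v, 1 / 2 * ⟪IV (u - v), u - v⟫ ≤ bregman f u v)
    (hup : ∀ u v, bregman f u v ≤ Lf / 2 * ⟪IV (u - v), u - v⟫) (hLS : 0 ≤ LS)
    (hα : 0 ≤ α) (hstep : α * (Lf + LS) ≤ β / 2) {u ustar e δ : E} (he : e = u - ustar)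
    (hδ : δ = gradient f u - gradient f ustar) (g : E) :
    α * (-⟪δ, H (δ + g)⟫ + ⟪e - H (δ + g), g⟫)
        + α ^ 2 * (Lf / 2 * ⟪H (δ + g), δ + g⟫ + LS / 2 * ⟪IV (e - H (δ + g)), e - H (δ + g)⟫)
      ≤ -(α * β / 2) * bregman f u ustar - α * β / 2 * ⟪H g, g⟫ := by
  have hβ1 : β < 1 := by
    rw [hβ, div_lt_one (by positivity)]
    linarith
  have hconv : ∀ u v, 0 ≤ bregman f u v := fun u v ↦
    (mul_nonneg (by norm_num) (hIV.inner_nonneg_left _)).trans (hlow u v)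
  have hcoco := inner_inv_gradient_sub_le_bregman hH (by linarith) hconv hup
  rw [← hβ] at hcoco
  have hδD : β * ⟪H δ, δ⟫ ≤ bregman f u ustar := hδ ▸ hcoco u ustar
  have hδDs : β * ⟪H δ, δ⟫ ≤ bregman f ustar u := by
    have h := hcoco ustar u
    rwa [← neg_sub, map_neg, inner_neg_neg, ← hδ] at h
  have heD : 1 / 2 * ⟪IV e, e⟫ ≤ bregman f u ustar := he ▸ hlow u ustar
  have heDs : 1 / 2 * ⟪IV e, e⟫ ≤ bregman f ustar u := by
    have h := hlow ustar u
    rwa [← neg_sub, map_neg, inner_neg_neg, ← he] at h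
  have heδ : ⟪e, δ⟫ = bregman f u ustar + bregman f ustar u := by
    rw [he, hδ, bregman_add_bregman_swap]
  have hcross := tpdv_cross_term_le hIV hH hβ1 (by linarith) hδDs heδ (hconv _ _) (g := g)
  have hZ := tpdv_quadratic_term_le hIV hH (g := g) (by linarith : ⟪IV e, e⟫ ≤ ⟪e, δ⟫)
  have hW := (hIV.inv hH).inner_map_add_add_le δ g
  have hA2 := (hIV.inv hH).inner_nonneg_left δ
  have hH2 := (hIV.inv hH).inner_nonneg_left g
  have h1 := mul_le_mul_of_nonneg_left hcross hα
  have h2 := mul_le_mul_of_nonneg_left hW (by positivity : 0 ≤ α ^ 2 * Lf / 2)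
  have h3 := mul_le_mul_of_nonneg_left hZ (by positivity : 0 ≤ α ^ 2 * LS / 2)
  have h4 := mul_le_mul_of_nonneg_right hstep (by positivity : 0 ≤ α * (⟪H δ, δ⟫ + ⟪H g, g⟫))
  have h5 := mul_le_mul_of_nonneg_left hδD (by positivity : 0 ≤ α / 2)
  linarith

theorem tpdv_step_le (hIV : IV.IsPositive) (hH : IV ∘ₗ H = LinearMap.id) (hLf : 1 ≤ Lf)
    (hβ : β = 1 / (2 * Lf)) (hlow : ∀ u v, 1 / 2 * ⟪IV (u - v), u - v⟫ ≤ bregman f u v)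
    (hup : ∀ u v, bregman f u v ≤ Lf / 2 * ⟪IV (u - v), u - v⟫)
    (hBt : ∀ v q, ⟪B v, q⟫ = ⟪v, Bt q⟫) (hP : P.IsSymmetric) (hPinv : P ∘ₗ Pinv = LinearMap.id)
    (hLS : ∀ x, ⟪Pinv (B x), B x⟫ ≤ LS * ⟪IV x, x⟫) (hLS0 : 0 ≤ LS)
    (hα : 0 ≤ α) (hstep : α * (Lf + LS) ≤ β / 2)
    {ustar : E} {pstar : F} (hsaddle : gradient f ustar + Bt pstar = 0)
    {u uhalf uplus : E} {p pplus : F}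
    (huhalf : uhalf = u - H (gradient f u + Bt p))
    (hpplus : pplus = p + α • Pinv (B uhalf - B ustar))
    (huplus : uplus = (1 - α) • u + α • uhalf) :
    bregman f uplus ustar + 1 / 2 * ⟪P (pplus - pstar), pplus - pstar⟫ ≤
      (1 - α * β / 2) * bregman f u ustar + 1 / 2 * ⟪P (p - pstar), p - pstar⟫
        - α * β / 2 * ⟪H (Bt (p - pstar)), Bt (p - pstar)⟫ := by
  have hexpand := tpdv_step_expand hH hup hBt hP hPinv hsaddle huhalf hpplus huplus rfl rfl
  have herror := tpdv_error_terms_le hIV hH hLf hβ hlow hup hLS0 hα hstep (u := u) (ustar := ustar)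
    rfl rfl (Bt (p - pstar))
  have hdual := mul_le_mul_of_nonneg_left
    (hLS (u - ustar - H (gradient f u - gradient f ustar + Bt (p - pstar)))) (sq_nonneg α)
  linarith

end TPDv

theorem lyapunov_contraction {D P0 PSt PQ H2 Eplus α β γ μ : ℝ} (hD : 0 ≤ D) (hP0 : 0 ≤ P0)
    (hPSt : 0 ≤ PSt) (hαβ : 0 < α * β) (hαγ : 0 < α * γ) (hγ : γ = β * μ)
    (hPQ : PQ = 1 / (1 + α * γ) * (P0 + α * γ * PSt)) (hμ : μ * PSt ≤ H2)
    (hstep : Eplus ≤ (1 - α * β / 2) * D + 1 / 2 * PQ - α * β / 2 * H2) :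
    Eplus ≤ (1 - 1 / 2 * min (α * γ / (1 + α * γ)) (α * β)) * (D + 1 / 2 * P0) := by
  set m := min (α * γ / (1 + α * γ)) (α * β)
  have hm : 0 < m := lt_min (by positivity) hαβ
  have hmβ : m ≤ α * β := min_le_right _ _
  have hmγ : m ≤ α * γ / (1 + α * γ) := min_le_left _ _
  have hdual : 1 / 2 * PQ - α * β / 2 * H2 ≤ 1 / (1 + α * γ) * (1 / 2 * P0) := by
    have h1 : α * β / 2 * (μ * PSt) = α * γ / 2 * PSt := by rw [hγ]; ring
    have h2 := mul_le_mul_of_nonneg_left hμ (by positivity : 0 ≤ α * β / 2)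
    have h3 : α * γ / (2 * (1 + α * γ)) * PSt ≤ α * γ / 2 * PSt := by
      gcongr
      linarith
    have h4 : 1 / 2 * PQ =
        1 / (1 + α * γ) * (1 / 2 * P0) + α * γ / (2 * (1 + α * γ)) * PSt := by
      rw [hPQ]
      field_simp
    linarith
  have hρ : 1 / (1 + α * γ) ≤ 1 - 1 / 2 * m := by
    have : 1 / (1 + α * γ) = 1 - α * γ / (1 + α * γ) := by field_simp; ring
    linarith
  have h1 := mul_le_mul_of_nonneg_right (by linarith : 1 - α * β / 2 ≤ 1 - 1 / 2 * m) hD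
  have h2 := mul_le_mul_of_nonneg_right hρ (by positivity : 0 ≤ 1 / 2 * P0)
  linarith

theorem stmt_17_general {n m : ℕ}
    (f : EuclideanSpace ℝ (Fin n) → ℝ)
    (B : EuclideanSpace ℝ (Fin n) →ₗ[ℝ] EuclideanSpace ℝ (Fin m))
    (hBsurj : Function.Surjective B)
    (Bt : EuclideanSpace ℝ (Fin m) →ₗ[ℝ] EuclideanSpace ℝ (Fin n))
    (hBt : ∀ v q, ⟪B v, q⟫ = ⟪v, Bt q⟫)
    (IV IVinv : EuclideanSpace ℝ (Fin n) →ₗ[ℝ] EuclideanSpace ℝ (Fin n))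
    (hIVsym : ∀ x y, ⟪IV x, y⟫ = ⟪x, IV y⟫) (hIVpos : ∀ x, x ≠ 0 → 0 < ⟪IV x, x⟫)
    (hIVinv' : IV ∘ₗ IVinv = LinearMap.id)
    (Lf : ℝ) (hLf : 1 ≤ Lf)
    (hlow : ∀ u v, 1/2 * ⟪IV (u - v), u - v⟫ ≤ f u - f v - ⟪gradient f v, u - v⟫)
    (hup : ∀ u v, f u - f v - ⟪gradient f v, u - v⟫ ≤ Lf/2 * ⟪IV (u - v), u - v⟫)
    (ustar : EuclideanSpace ℝ (Fin n)) (pstar b : EuclideanSpace ℝ (Fin m))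
    (hsaddle : gradient f ustar + Bt pstar = 0) (hconstraint : B ustar = b)
    (S : EuclideanSpace ℝ (Fin m) →ₗ[ℝ] EuclideanSpace ℝ (Fin m))
    (hS : S = B ∘ₗ IVinv ∘ₗ Bt)
    (St Stinv IQ : EuclideanSpace ℝ (Fin m) →ₗ[ℝ] EuclideanSpace ℝ (Fin m))
    (hStsym : ∀ x y, ⟪St x, y⟫ = ⟪x, St y⟫) (hStpos : ∀ x, x ≠ 0 → 0 < ⟪St x, x⟫)
    (hIQsym : ∀ x y, ⟪IQ x, y⟫ = ⟪x, IQ y⟫) (hIQpos : ∀ x, x ≠ 0 → 0 < ⟪IQ x, x⟫)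
    (hStinv' : St ∘ₗ Stinv = LinearMap.id)
    (β μt γ α : ℝ)
    (hβ : β = 1/(2*Lf))
    (hμt : μt = sInf (spectrum ℝ (Stinv ∘ₗ S : Module.End ℝ (EuclideanSpace ℝ (Fin m)))))
    (hγ : γ = β * μt)
    (IQplus IQplusinv : EuclideanSpace ℝ (Fin m) →ₗ[ℝ] EuclideanSpace ℝ (Fin m))
    (hIQplus : IQplus = (1/(1 + α*γ)) • (IQ + (α*γ) • St))
    (hIQplusinv' : IQplus ∘ₗ IQplusinv = LinearMap.id)
    (LS : ℝ)
    (hLS : LS = sSup (spectrum ℝ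
      (IQplusinv ∘ₗ S : Module.End ℝ (EuclideanSpace ℝ (Fin m)))))
    (u uhalf uplus : EuclideanSpace ℝ (Fin n)) (p pplus : EuclideanSpace ℝ (Fin m))
    (huhalf : uhalf = u - IVinv (gradient f u + Bt p))
    (hpplus : pplus = p + α • IQplusinv (B uhalf - b))
    (huplus : uplus = (1 - α) • u + α • uhalf)
    (E Eplus : ℝ)
    (hE : E = f u - f ustar - ⟪gradient f ustar, u - ustar⟫
        + 1/2 * ⟪IQ (p - pstar), p - pstar⟫)
    (hEplus : Eplus = f uplus - f ustar - ⟪gradient f ustar, uplus - ustar⟫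
        + 1/2 * ⟪IQplus (pplus - pstar), pplus - pstar⟫)
    (hα0 : 0 < α) (hαbound : α ≤ β/(2*(Lf + LS)) * min (μt/LS) 1) :
    (∃ ρ : ℝ, ρ < 1 ∧ Eplus ≤ ρ * E) ∧
      (α = β/(4*(Lf + LS)) * min (μt/LS) 1 →
        Eplus ≤ (1 - 1/2 * min (α*γ/(1 + α*γ)) (α*β)) * E) := by
  subst hS hconstraint
  rcases Nat.eq_zero_or_pos m with rfl | hm
  · -- both spectra are empty, so `μt = LS = 0` (junk `sInf ∅`, `sSup ∅`) and `α ≤ 0`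
    simp [hμt, hLS, spectrum.of_subsingleton] at hαbound
    linarith
  have : Nontrivial (EuclideanSpace ℝ (Fin m)) := ⟨⟨EuclideanSpace.single ⟨0, hm⟩ 1, 0, by simp⟩⟩
  have hIV := LinearMap.isPositive_of_inner_pos hIVsym hIVpos
  obtain ⟨hμ0, hμS⟩ :=
    sInf_spectrum_inv_comp_schur hBt hBsurj hIVsym hIVpos hIVinv' hStsym hStpos hStinv'
  rw [← hμt] at hμ0 hμS
  have hβ0 : 0 < β := by rw [hβ]; positivity
  have hαγ : 0 < α * γ := by rw [hγ]; positivity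
  have hIQplus_apply (x) : ⟪IQplus x, x⟫ = 1 / (1 + α * γ) * (⟪IQ x, x⟫ + α * γ * ⟪St x, x⟫) :=
    hIQplus ▸ LinearMap.inner_smul_add_smul_apply (A := IQ) (M := St) _ _ x
  have hIQplus_sym : IQplus.IsSymmetric := hIQplus ▸
    (LinearMap.IsSymmetric.add hIQsym (.smul (conj_trivial _) hStsym)).smul (conj_trivial _)
  have hIQplus_pos : ∀ x, x ≠ 0 → 0 < ⟪IQplus x, x⟫ := hIQplus ▸ fun _ ↦
    LinearMap.inner_smul_add_smul_pos hIQpos hStpos (by positivity) hαγ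
  obtain ⟨hLS0, hLSB⟩ := sSup_spectrum_inv_comp_schur hBt hBsurj hIVsym hIVpos hIVinv'
    hIQplus_sym hIQplus_pos hIQplusinv'
  rw [← hLS] at hLS0 hLSB
  have hstep : α * (Lf + LS) ≤ β / 2 := by
    have h := hαbound.trans (mul_le_of_le_one_right (by positivity) (min_le_right _ _))
    rw [le_div_iff₀ (by linarith)] at h
    linarith
  have key := tpdv_step_le hIV hIVinv' hLf hβ hlow hup hBt hIQplus_sym hIQplusinv' hLSB hLS0.le
    hα0.le hstep hsaddle huhalf hpplus huplus
  have hcontr := lyapunov_contraction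
    ((mul_nonneg (by norm_num) (hIV.inner_nonneg_left _)).trans (hlow u ustar))
    ((LinearMap.isPositive_of_inner_pos hIQsym hIQpos).inner_nonneg_left _)
    ((LinearMap.isPositive_of_inner_pos hStsym hStpos).inner_nonneg_left _)
    (mul_pos hα0 hβ0) hαγ hγ (hIQplus_apply _) (hμS _) (hEplus ▸ key)
  rw [← hE] at hcontr
  have hmin : 0 < min (α * γ / (1 + α * γ)) (α * β) := lt_min (by positivity) (by positivity)
  exact ⟨⟨_, by linarith, hcontr⟩, fun _ ↦ hcontr⟩

/-- Theorem 3.2, one step of the TPDv algorithm: contraction of the Lyapunov function. -/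
theorem stmt_17 {n m : ℕ}
    (f : EuclideanSpace ℝ (Fin n) → ℝ) (hf : Differentiable ℝ f)
    (B : EuclideanSpace ℝ (Fin n) →ₗ[ℝ] EuclideanSpace ℝ (Fin m))
    (hBsurj : Function.Surjective B)
    (Bt : EuclideanSpace ℝ (Fin m) →ₗ[ℝ] EuclideanSpace ℝ (Fin n))
    (hBt : ∀ v q, ⟪B v, q⟫ = ⟪v, Bt q⟫)
    (IV IVinv : EuclideanSpace ℝ (Fin n) →ₗ[ℝ] EuclideanSpace ℝ (Fin n))
    (hIVsym : ∀ x y, ⟪IV x, y⟫ = ⟪x, IV y⟫) (hIVpos : ∀ x, x ≠ 0 → 0 < ⟪IV x, x⟫)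
    (hIVinv : IVinv ∘ₗ IV = LinearMap.id) (hIVinv' : IV ∘ₗ IVinv = LinearMap.id)
    (Lf : ℝ) (hLf : 1 ≤ Lf)
    (hlow : ∀ u v, 1/2 * ⟪IV (u - v), u - v⟫ ≤ f u - f v - ⟪gradient f v, u - v⟫)
    (hup : ∀ u v, f u - f v - ⟪gradient f v, u - v⟫ ≤ Lf/2 * ⟪IV (u - v), u - v⟫)
    (ustar : EuclideanSpace ℝ (Fin n)) (pstar b : EuclideanSpace ℝ (Fin m))
    (hsaddle : gradient f ustar + Bt pstar = 0) (hconstraint : B ustar = b)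
    (S : EuclideanSpace ℝ (Fin m) →ₗ[ℝ] EuclideanSpace ℝ (Fin m))
    (hS : S = B ∘ₗ IVinv ∘ₗ Bt)
    (St Stinv IQ : EuclideanSpace ℝ (Fin m) →ₗ[ℝ] EuclideanSpace ℝ (Fin m))
    (hStsym : ∀ x y, ⟪St x, y⟫ = ⟪x, St y⟫) (hStpos : ∀ x, x ≠ 0 → 0 < ⟪St x, x⟫)
    (hIQsym : ∀ x y, ⟪IQ x, y⟫ = ⟪x, IQ y⟫) (hIQpos : ∀ x, x ≠ 0 → 0 < ⟪IQ x, x⟫)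
    (hStinv : Stinv ∘ₗ St = LinearMap.id) (hStinv' : St ∘ₗ Stinv = LinearMap.id)
    (β μt γ α : ℝ)
    (hβ : β = 1/(2*Lf))
    (hμt : μt = sInf (spectrum ℝ (Stinv ∘ₗ S : Module.End ℝ (EuclideanSpace ℝ (Fin m)))))
    (hγ : γ = β * μt)
    (IQplus IQplusinv : EuclideanSpace ℝ (Fin m) →ₗ[ℝ] EuclideanSpace ℝ (Fin m))
    (hIQplus : IQplus = (1/(1 + α*γ)) • (IQ + (α*γ) • St))
    (hIQplusinv : IQplusinv ∘ₗ IQplus = LinearMap.id)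
    (hIQplusinv' : IQplus ∘ₗ IQplusinv = LinearMap.id)
    (LS : ℝ)
    (hLS : LS = sSup (spectrum ℝ
      (IQplusinv ∘ₗ S : Module.End ℝ (EuclideanSpace ℝ (Fin m)))))
    (u uhalf uplus : EuclideanSpace ℝ (Fin n)) (p pplus : EuclideanSpace ℝ (Fin m))
    (huhalf : uhalf = u - IVinv (gradient f u + Bt p))
    (hpplus : pplus = p + α • IQplusinv (B uhalf - b))
    (huplus : uplus = (1 - α) • u + α • uhalf)
    (E Eplus : ℝ)
    (hE : E = f u - f ustar - ⟪gradient f ustar, u - ustar⟫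
        + 1/2 * ⟪IQ (p - pstar), p - pstar⟫)
    (hEplus : Eplus = f uplus - f ustar - ⟪gradient f ustar, uplus - ustar⟫
        + 1/2 * ⟪IQplus (pplus - pstar), pplus - pstar⟫)
    (hα0 : 0 < α) (hαbound : α ≤ β/(2*(Lf + LS)) * min (μt/LS) 1) :
    (∃ ρ : ℝ, ρ < 1 ∧ Eplus ≤ ρ * E) ∧
      (α = β/(4*(Lf + LS)) * min (μt/LS) 1 →
        Eplus ≤ (1 - 1/2 * min (α*γ/(1 + α*γ)) (α*β)) * E) :=
  stmt_17_general f B hBsurj Bt hBt IV IVinv hIVsym hIVpos hIVinv' Lf hLf hlow hup ustar pstar b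
    hsaddle hconstraint S hS St Stinv IQ hStsym hStpos hIQsym hIQpos hStinv' β μt γ α hβ hμt hγ
    IQplus IQplusinv hIQplus hIQplusinv' LS hLS u uhalf uplus p pplus huhalf hpplus huplus E Eplus
    hE hEplus hα0 hαbound
end
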